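/- Let n ≥ 7 and 0 < s < 2, 2⋆(s) = 2(n-s)/(n-2). With U₁(X) = κ_{n,s}(1+|X|^{2-s})^{-(n-2)/(2-s)}, κ_{n,s} = ((n-s)(n-2))^{(n-2)/(2(2-s))}, one has ∫_{ℝⁿ}|X|^{4-s} U₁^{2⋆(s)} dX / ∫_{ℝⁿ}|X|²U₁² dX = (n-s)(n-6)(n+2) / (2(2n-2-s)). -/

import Mathlib

/-!
In polar coordinates both integrals reduce, with t = 2 - s, to multiples of
I(p, q) = ∫₀^∞ r^p (1 + r^t)^(-q) dr, with the same surface factor and the same power κ²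
once κ^{2⋆(s)} = (n - s)(n - 2) κ² is used. Integrating by parts gives
(p + 1) I(p, q) = q t I(p + t, q + 1), and writing 1 = (1 + r^t) - r^t gives
I(p, q) = I(p, q + 1) + I(p + t, q + 1). Together these express the numerator's
I(n + 3 - s, 2(n - s)/t) through the denominator's I(n + 1, 2(n - 2)/t), and n ≥ 7 is
exactly the condition for the latter to converge.
-/

open MeasureTheory

noncomputable def kappa (n : ℕ) (s : ℝ) : ℝ :=
  (((n : ℝ) - s) * ((n : ℝ) - 2)) ^ (((n : ℝ) - 2) / (2 * (2 - s)))

noncomputable def U1 (n : ℕ) (s : ℝ) (X : EuclideanSpace ℝ (Fin n)) : ℝ :=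
  kappa n s * (1 + ‖X‖ ^ (2 - s)) ^ (-(((n : ℝ) - 2) / (2 - s)))

noncomputable def critExp (n : ℕ) (s : ℝ) : ℝ := 2 * ((n : ℝ) - s) / ((n : ℝ) - 2)

open Real Set Filter Topology
open scoped ENNReal

/-- Equals `B((p + 1) / t, q - (p + 1) / t) / t` when it converges. -/
noncomputable def betaIntegralIoi (t p q : ℝ) : ℝ :=
  ∫ r in Ioi (0 : ℝ), r ^ p * (1 + r ^ t) ^ (-q)

section BetaIntegralIoi

variable {t p q : ℝ}

lemma rpow_mul_one_add_rpow_rpow_neg_le {r : ℝ} (hr : 0 < r) (hq : 0 ≤ q) :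
    r ^ p * (1 + r ^ t) ^ (-q) ≤ r ^ (p - q * t) := by
  have hrt : 0 < r ^ t := rpow_pos_of_pos hr t
  calc r ^ p * (1 + r ^ t) ^ (-q) ≤ r ^ p * (r ^ t) ^ (-q) := by
        refine mul_le_mul_of_nonneg_left ?_ (rpow_nonneg hr.le p)
        exact rpow_le_rpow_of_nonpos hrt (by linarith) (by linarith)
    _ = r ^ (p - q * t) := by
        rw [← rpow_mul hr.le, ← rpow_add hr]
        ring_nf

lemma integrableOn_rpow_mul_one_add_rpow_rpow_neg (ht : 0 < t) (hp : -1 < p)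
    (hq : p + 1 < q * t) : IntegrableOn (fun r : ℝ => r ^ p * (1 + r ^ t) ^ (-q)) (Ioi 0) := by
  have hq0 : 0 ≤ q := (pos_of_mul_pos_left (by linarith) ht.le).le
  have hmeas : AEStronglyMeasurable (fun r : ℝ => r ^ p * (1 + r ^ t) ^ (-q)) := by
    fun_prop
  rw [← Ioc_union_Ioi_eq_Ioi zero_le_one]
  refine IntegrableOn.union ?_ ?_
  · have hint : IntegrableOn (fun r : ℝ => r ^ p) (Ioc 0 1) :=
      (intervalIntegrable_iff_integrableOn_Ioc_of_le zero_le_one).1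
        (intervalIntegral.intervalIntegrable_rpow' hp)
    refine hint.mono' hmeas.restrict ?_
    filter_upwards [ae_restrict_mem measurableSet_Ioc] with r hr
    have hr0 : 0 < r := hr.1
    have : (1 + r ^ t) ^ (-q) ≤ 1 :=
      rpow_le_one_of_one_le_of_nonpos (by linarith [rpow_nonneg hr0.le t]) (by linarith)
    rw [norm_of_nonneg (by positivity)]
    exact mul_le_of_le_one_right (by positivity) this
  · refine (integrableOn_Ioi_rpow_of_lt (a := p - q * t) (by linarith) one_pos).mono'
      hmeas.restrict ?_
    filter_upwards [ae_restrict_mem measurableSet_Ioi] with r (hr : 1 < r)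
    have hr0 : 0 < r := by linarith
    rw [norm_of_nonneg (by positivity)]
    exact rpow_mul_one_add_rpow_rpow_neg_le hr0 hq0

lemma betaIntegralIoi_pos (ht : 0 < t) (hp : -1 < p) (hq : p + 1 < q * t) :
    0 < betaIntegralIoi t p q := by
  refine (setIntegral_pos_iff_support_of_nonneg_ae ?_
    (integrableOn_rpow_mul_one_add_rpow_rpow_neg ht hp hq)).2 ?_
  · filter_upwards [ae_restrict_mem measurableSet_Ioi] with r (hr : 0 < r)
    positivity
  · have hsupp :
        Ioi (0 : ℝ) ⊆ Function.support (fun r : ℝ => r ^ p * (1 + r ^ t) ^ (-q)) ∩ Ioi 0 :=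
      fun r (hr : 0 < r) => ⟨(show 0 < r ^ p * (1 + r ^ t) ^ (-q) by positivity).ne', hr⟩
    exact (show (0 : ℝ≥0∞) < volume (Ioi (0 : ℝ)) by simp).trans_le (measure_mono hsupp)

lemma hasDerivAt_rpow_mul_one_add_rpow_rpow_neg {x : ℝ} (hx : 0 < x) :
    HasDerivAt (fun r : ℝ => r ^ (p + 1) * (1 + r ^ t) ^ (-q))
      ((p + 1) * (x ^ p * (1 + x ^ t) ^ (-q)) - q * t * (x ^ (p + t) * (1 + x ^ t) ^ (-(q + 1))))
      x := by
  have hb : 0 < 1 + x ^ t := by positivity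
  have hpow : HasDerivAt (fun r : ℝ => r ^ (p + 1)) ((p + 1) * x ^ p) x := by
    simpa using hasDerivAt_rpow_const (p := p + 1) (Or.inl hx.ne')
  have hbase : HasDerivAt (fun r : ℝ => 1 + r ^ t) (t * x ^ (t - 1)) x :=
    (hasDerivAt_rpow_const (Or.inl hx.ne')).const_add 1
  refine (hpow.mul (hbase.rpow_const (p := -q) (Or.inl hb.ne'))).congr_deriv ?_
  have hx1 : x ^ (p + t) = x ^ (p + 1) * x ^ (t - 1) := by
    rw [← rpow_add hx]; ring_nf
  rw [hx1, show -q - 1 = -(q + 1) by ring]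
  ring

lemma add_one_mul_betaIntegralIoi (ht : 0 < t) (hp : -1 < p) (hq : p + 1 < q * t) :
    (p + 1) * betaIntegralIoi t p q = q * t * betaIntegralIoi t (p + t) (q + 1) := by
  have hq0 : 0 ≤ q := (pos_of_mul_pos_left (by linarith) ht.le).le
  have hint₁ := integrableOn_rpow_mul_one_add_rpow_rpow_neg ht hp hq
  have hint₂ := integrableOn_rpow_mul_one_add_rpow_rpow_neg (p := p + t) (q := q + 1) ht
    (by linarith) (by linarith)
  have hcont : ContinuousWithinAt (fun r : ℝ => r ^ (p + 1) * (1 + r ^ t) ^ (-q)) (Ici 0) 0 := by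
    refine ContinuousAt.continuousWithinAt ?_
    refine (continuousAt_rpow_const 0 _ (Or.inr (by linarith))).mul
      (((continuousAt_rpow_const 0 t (Or.inr ht.le)).const_add 1).rpow_const (Or.inl ?_))
    simp [zero_rpow ht.ne']
  have hlim : Tendsto (fun r : ℝ => r ^ (p + 1) * (1 + r ^ t) ^ (-q)) atTop (𝓝 0) := by
    refine squeeze_zero' ?_ ?_ (tendsto_rpow_neg_atTop (y := q * t - (p + 1)) (by linarith))
    · filter_upwards [eventually_gt_atTop 0] with r hr
      positivity
    · filter_upwards [eventually_gt_atTop 0] with r hr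
      convert rpow_mul_one_add_rpow_rpow_neg_le hr hq0 using 2
      ring
  have hftc := integral_Ioi_of_hasDerivAt_of_tendsto hcont
    (fun x hx => hasDerivAt_rpow_mul_one_add_rpow_rpow_neg hx) ((hint₁.const_mul _).sub
      (hint₂.const_mul _)) hlim
  rw [integral_sub (hint₁.const_mul _) (hint₂.const_mul _), integral_const_mul,
    integral_const_mul] at hftc
  simp only [zero_rpow (by linarith : p + 1 ≠ 0), zero_mul, sub_zero] at hftc
  unfold betaIntegralIoi
  linarith

lemma betaIntegralIoi_eq_add (ht : 0 < t) (hp : -1 < p) (hq : p + 1 < q * t) :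
    betaIntegralIoi t p q = betaIntegralIoi t p (q + 1) + betaIntegralIoi t (p + t) (q + 1) := by
  unfold betaIntegralIoi
  rw [← integral_add (integrableOn_rpow_mul_one_add_rpow_rpow_neg ht hp (by linarith))
    (integrableOn_rpow_mul_one_add_rpow_rpow_neg ht (by linarith) (by linarith))]
  refine setIntegral_congr_fun measurableSet_Ioi fun r (hr : 0 < r) => ?_
  have hb : 0 < 1 + r ^ t := by positivity
  rw [rpow_add hr, neg_add, rpow_add hb, rpow_neg_one]
  field_simp

lemma mul_betaIntegralIoi_add_one (ht : 0 < t) (hp : -1 < p) (hq : p + 1 < q * t) :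
    q * t * betaIntegralIoi t p (q + 1) = (q * t - (p + 1)) * betaIntegralIoi t p q := by
  linear_combination
    add_one_mul_betaIntegralIoi ht hp hq - (q * t) * betaIntegralIoi_eq_add ht hp hq

lemma mul_betaIntegralIoi_add_add_two (ht : 0 < t) (hp : -1 < p) (hq : p + 1 < q * t) :
    (q + 1) * t * (q * t) * betaIntegralIoi t (p + t) (q + 2) =
      (p + 1) * (q * t - (p + 1)) * betaIntegralIoi t p q := by
  have hibp := add_one_mul_betaIntegralIoi (q := q + 1) ht hp (by linarith)
  rw [show q + 1 + 1 = q + 2 by ring] at hibp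
  linear_combination (p + 1) * mul_betaIntegralIoi_add_one ht hp hq - (q * t) * hibp

end BetaIntegralIoi

section U1

variable {n : ℕ} {s : ℝ}

lemma kappa_pos (hn : 2 < n) (hs : s < 2) : 0 < kappa n s := by
  have : (2 : ℝ) < n := by exact_mod_cast hn
  exact rpow_pos_of_pos (mul_pos (by linarith) (by linarith)) _

lemma kappa_rpow_critExp (hn : 2 < n) (hs : s < 2) :
    kappa n s ^ critExp n s = ((n : ℝ) - s) * ((n : ℝ) - 2) * kappa n s ^ 2 := by
  have hn' : (2 : ℝ) < n := by exact_mod_cast hn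
  have hn2 : (n : ℝ) - 2 ≠ 0 := by linarith
  have hs2 : 2 - s ≠ 0 := by linarith
  have hexp : critExp n s = 2 * (2 - s) / ((n : ℝ) - 2) + 2 := by
    unfold critExp
    field_simp
    ring
  rw [hexp, rpow_add (kappa_pos hn hs), rpow_two, kappa,
    ← rpow_mul (mul_nonneg (by linarith) (by linarith))]
  rw [show ((n : ℝ) - 2) / (2 * (2 - s)) * (2 * (2 - s) / ((n : ℝ) - 2)) = 1 by field_simp,
    rpow_one]

lemma integral_norm_rpow_mul_U1_rpow (hn : 2 ≤ n) (hs : s < 2) (a b : ℝ) :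
    ∫ X : EuclideanSpace ℝ (Fin n), ‖X‖ ^ a * U1 n s X ^ b =
      n * volume.real (Metric.ball (0 : EuclideanSpace ℝ (Fin n)) 1) * kappa n s ^ b *
        betaIntegralIoi (2 - s) (n - 1 + a) (b * (n - 2) / (2 - s)) := by
  have hn' : (2 : ℝ) ≤ n := by exact_mod_cast hn
  have hkappa : 0 ≤ kappa n s := rpow_nonneg (mul_nonneg (by linarith) (by linarith)) _
  have : Nontrivial (EuclideanSpace ℝ (Fin n)) :=
    Module.nontrivial_of_finrank_pos (R := ℝ) (by rw [finrank_euclideanSpace_fin]; omega)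
  have hradial : EqOn (fun r : ℝ => r ^ (n - 1) •
        (r ^ a * (kappa n s * (1 + r ^ (2 - s)) ^ (-(((n : ℝ) - 2) / (2 - s)))) ^ b))
      (fun r => kappa n s ^ b * (r ^ ((n : ℝ) - 1 + a) *
        (1 + r ^ (2 - s)) ^ (-(b * ((n : ℝ) - 2) / (2 - s))))) (Ioi 0) := by
    intro r (hr : 0 < r)
    have hb : 0 < 1 + r ^ (2 - s) := by positivity
    simp only [smul_eq_mul]
    rw [mul_rpow hkappa (rpow_nonneg hb.le _), ← rpow_mul hb.le, ← rpow_natCast,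
      Nat.cast_sub (by omega), rpow_add hr]
    push_cast
    ring_nf
  simp only [U1]
  rw [integral_fun_norm_addHaar volume (fun r : ℝ => r ^ a *
      (kappa n s * (1 + r ^ (2 - s)) ^ (-(((n : ℝ) - 2) / (2 - s)))) ^ b),
    finrank_euclideanSpace_fin, nsmul_eq_mul, smul_eq_mul, setIntegral_congr_fun measurableSet_Ioi
    hradial, integral_const_mul, betaIntegralIoi]
  ring

end U1

theorem stmt_10_general (n : ℕ) (hn : 7 ≤ n) (s : ℝ) (hs2 : s < 2) :
    (∫ X : EuclideanSpace ℝ (Fin n), ‖X‖ ^ (4 - s) * (U1 n s X) ^ (critExp n s)) /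
        (∫ X : EuclideanSpace ℝ (Fin n), ‖X‖ ^ 2 * (U1 n s X) ^ 2) =
      ((n : ℝ) - s) * ((n : ℝ) - 6) * ((n : ℝ) + 2) / (2 * (2 * (n : ℝ) - 2 - s)) := by
  have hn' : (7 : ℝ) ≤ n := by exact_mod_cast hn
  have ht : 0 < 2 - s := by linarith
  have hn2 : (n : ℝ) - 2 ≠ 0 := by linarith
  have hnum := integral_norm_rpow_mul_U1_rpow (n := n) (by omega) hs2 (4 - s) (critExp n s)
  rw [show (n : ℝ) - 1 + (4 - s) = n + 1 + (2 - s) by ring,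
    show critExp n s * (n - 2) / (2 - s) = 2 * (n - 2) / (2 - s) + 2 by
      unfold critExp; field_simp; ring,
    kappa_rpow_critExp (by omega) hs2] at hnum
  have hden := integral_norm_rpow_mul_U1_rpow (n := n) (by omega) hs2 2 2
  simp only [rpow_two, show (n : ℝ) - 1 + 2 = n + 1 by ring] at hden
  set q : ℝ := 2 * (n - 2) / (2 - s) with hq
  have hqt : q * (2 - s) = 2 * (n - 2) := by rw [hq]; field_simp
  have hrec := mul_betaIntegralIoi_add_add_two (p := n + 1) (q := q) ht (by linarith) (by linarith)
  rw [add_mul, hqt, one_mul] at hrec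
  have hC : 0 < n * volume.real (Metric.ball (0 : EuclideanSpace ℝ (Fin n)) 1) :=
    mul_pos (by positivity)
      (ENNReal.toReal_pos (Metric.measure_ball_pos volume 0 one_pos).ne' measure_ball_lt_top.ne)
  have hJ := betaIntegralIoi_pos (p := n + 1) (q := q) ht (by linarith) (by linarith)
  rw [hnum, hden, div_eq_div_iff (by have := kappa_pos (n := n) (by omega) hs2; positivity)
    (by linarith)]
  linear_combination (n * volume.real (Metric.ball (0 : EuclideanSpace ℝ (Fin n)) 1) *
    kappa n s ^ 2 * (n - s)) * hrec

theorem stmt_10 (n : ℕ) (hn : 7 ≤ n) (s : ℝ) (hs0 : 0 < s) (hs2 : s < 2) :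
    (∫ X : EuclideanSpace ℝ (Fin n), ‖X‖ ^ (4 - s) * (U1 n s X) ^ (critExp n s)) /
        (∫ X : EuclideanSpace ℝ (Fin n), ‖X‖ ^ 2 * (U1 n s X) ^ 2) =
      ((n : ℝ) - s) * ((n : ℝ) - 6) * ((n : ℝ) + 2) / (2 * (2 * (n : ℝ) - 2 - s)) :=
  stmt_10_general n hn s hs2
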